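/- If n ≥ 2, x ≥ 3, and U_n^x + U_{n+1}^x = U_m for positive integers m, then (n-1)x + 1 < m < (n+1)x + 2. -/

import Mathlib

/-!
Everything follows from the addition formula `U (a + b + 1) = U (a + 1) U (b + 1) + U a U b`,
which makes `k ↦ U (k + 1)` supermultiplicative and gives `U (a + b + 1) ≤ U (a + 1) U (b + 2)`.
Hence `U ((n - 1) x + 1) ≤ U (n + 1) ^ x < U m`, while
`U m ≤ U (n + 1) ^ (x - 1) U (n + 2) < U (n + 1) ^ (x - 1) U (n + 3) ≤ U (n x + 3)`,
and monotonicity of `U` turns these into bounds on `m`.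
-/

def U (r : ℕ) : ℕ → ℕ
  | 0 => 0
  | 1 => 1
  | n + 2 => r * U r (n + 1) + U r n

def V (r : ℕ) : ℕ → ℕ
  | 0 => 2
  | 1 => r
  | n + 2 => r * V r (n + 1) + V r n

section

variable {r : ℕ}

@[simp] lemma U_zero (r : ℕ) : U r 0 = 0 := rfl

@[simp] lemma U_one (r : ℕ) : U r 1 = 1 := rfl

lemma U_add_two (r n : ℕ) : U r (n + 2) = r * U r (n + 1) + U r n := rfl

theorem U_add (r a b : ℕ) : U r (a + b + 1) = U r (a + 1) * U r (b + 1) + U r a * U r b := by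
  induction b generalizing a with
  | zero => simp
  | succ b ih =>
    rw [show a + (b + 1) + 1 = (a + 1) + b + 1 by ring, ih (a + 1), U_add_two r a, U_add_two r b]
    ring

lemma U_succ_mul_U_succ_le (r a b : ℕ) : U r (a + 1) * U r (b + 1) ≤ U r (a + b + 1) := by
  rw [U_add]
  exact Nat.le_add_right _ _

lemma U_add_U_succ_le (hr : 1 ≤ r) (n : ℕ) : U r n + U r (n + 1) ≤ U r (n + 2) := by
  rw [U_add_two]
  nlinarith

lemma U_mono (hr : 1 ≤ r) : Monotone (U r) := by
  refine monotone_nat_of_le_succ fun n => ?_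
  cases n with
  | zero => simp
  | succ n => linarith [U_add_U_succ_le hr n]

lemma U_succ_pos (hr : 1 ≤ r) (n : ℕ) : 0 < U r (n + 1) :=
  U_mono hr (Nat.le_add_left 1 n)

lemma U_add_two_lt (hr : 1 ≤ r) (n : ℕ) : U r (n + 2) < U r (n + 3) := by
  linarith [U_add_U_succ_le hr (n + 1), U_succ_pos hr n]

lemma U_le_U_succ_mul_U_add_two (hr : 1 ≤ r) (a b : ℕ) :
    U r (a + b + 1) ≤ U r (a + 1) * U r (b + 2) := by
  have ha : U r a ≤ U r (a + 1) := U_mono hr (Nat.le_succ a)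
  calc U r (a + b + 1) = U r (a + 1) * U r (b + 1) + U r a * U r b := U_add r a b
    _ ≤ U r (a + 1) * (U r b + U r (b + 1)) := by nlinarith
    _ ≤ U r (a + 1) * U r (b + 2) := Nat.mul_le_mul_left _ (U_add_U_succ_le hr b)

lemma U_mul_add_one_le_pow (hr : 1 ≤ r) (s k : ℕ) : U r (s * k + 1) ≤ U r (s + 2) ^ k := by
  induction k with
  | zero => simp
  | succ k ih =>
    calc U r (s * (k + 1) + 1) = U r (s * k + s + 1) := by ring_nf
      _ ≤ U r (s * k + 1) * U r (s + 2) := U_le_U_succ_mul_U_add_two hr _ _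
      _ ≤ U r (s + 2) ^ k * U r (s + 2) := Nat.mul_le_mul_right _ ih
      _ = U r (s + 2) ^ (k + 1) := (pow_succ _ _).symm

lemma U_pow_mul_U_le (r s t k : ℕ) : U r (s + 1) ^ k * U r (t + 1) ≤ U r (s * k + t + 1) := by
  induction k with
  | zero => simp
  | succ k ih =>
    calc U r (s + 1) ^ (k + 1) * U r (t + 1) = U r (s + 1) * (U r (s + 1) ^ k * U r (t + 1)) := by
          ring
      _ ≤ U r (s + 1) * U r (s * k + t + 1) := Nat.mul_le_mul_left _ ih
      _ ≤ U r (s + (s * k + t) + 1) := U_succ_mul_U_succ_le r _ _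
      _ = U r (s * (k + 1) + t + 1) := by ring_nf

lemma U_pow_add_U_succ_pow_le (hr : 1 ≤ r) (n q : ℕ) :
    U r n ^ (q + 1) + U r (n + 1) ^ (q + 1) ≤ U r (n + 1) ^ q * U r (n + 2) := by
  have hn : U r n ^ q ≤ U r (n + 1) ^ q := Nat.pow_le_pow_left (U_mono hr (Nat.le_succ n)) q
  calc U r n ^ (q + 1) + U r (n + 1) ^ (q + 1)
      = U r n ^ q * U r n + U r (n + 1) ^ q * U r (n + 1) := by ring
    _ ≤ U r (n + 1) ^ q * (U r n + U r (n + 1)) := by nlinarith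
    _ ≤ U r (n + 1) ^ q * U r (n + 2) := Nat.mul_le_mul_left _ (U_add_U_succ_le hr n)

end

theorem stmt_12_general (r : ℕ) (hr : 1 ≤ r) (n x m : ℕ) (hn : 2 ≤ n) (hx : 3 ≤ x)
    (h : U r n ^ x + U r (n + 1) ^ x = U r m) :
    (n - 1) * x + 1 < m ∧ m < (n + 1) * x + 2 := by
  obtain ⟨q, rfl⟩ : ∃ q, x = q + 1 := ⟨x - 1, by omega⟩
  constructor
  · refine (U_mono hr).reflect_lt ?_
    have hs : n - 1 + 2 = n + 1 := by omega
    calc U r ((n - 1) * (q + 1) + 1) ≤ U r (n + 1) ^ (q + 1) :=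
          hs ▸ U_mul_add_one_le_pow hr (n - 1) (q + 1)
      _ < U r m := by
          rw [← h]
          have : 0 < U r n ^ (q + 1) := pow_pos (U_mono hr (show 1 ≤ n by omega)) (q + 1)
          omega
  · suffices m < n * (q + 1) + 3 by nlinarith
    refine (U_mono hr).reflect_lt ?_
    calc U r m ≤ U r (n + 1) ^ q * U r (n + 2) := h ▸ U_pow_add_U_succ_pow_le hr n q
      _ < U r (n + 1) ^ q * U r (n + 3) :=
          Nat.mul_lt_mul_of_pos_left (U_add_two_lt hr n) (pow_pos (U_succ_pos hr n) q)
      _ ≤ U r (n * q + (n + 2) + 1) := U_pow_mul_U_le r n (n + 2) q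
      _ = U r (n * (q + 1) + 3) := by ring_nf

theorem stmt_12 (r : ℕ) (hr : 1 ≤ r) (n x m : ℕ) (hn : 2 ≤ n) (hx : 3 ≤ x) (hm : 1 ≤ m)
    (h : U r n ^ x + U r (n + 1) ^ x = U r m) :
    (n - 1) * x + 1 < m ∧ m < (n + 1) * x + 2 :=
  stmt_12_general r hr n x m hn hx h
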